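/- arXiv:math/0601037 — 2 statements merged into one kernel-verified Lean document; each statement's English description precedes it below -/
import Mathlib

section
/- Let k be a field of characteristic zero and let w ∈ k⟦x,y,z⟧. Suppose that the formal partial derivative ∂w/∂z equals xᵉyᶠ·δ for some natural numbers e, f and some unit δ of k⟦x,y,z⟧. Then there exist g ∈ k⟦x,y⟧ and z̃ ∈ k⟦x,y,z⟧ with z̃(0,0,0) = 0 and ∂z̃/∂z a unit (so that x, y, z̃ is a regular system of parameters of k⟦x,y,z⟧) such that w = g(x,y) + xᵉyᶠ·z̃. -/
open MvPowerSeries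

/-- The formal partial derivative of a multivariate power series with respect to the
variable `s`, defined by termwise differentiation. -/
noncomputable def mvPderiv {σ : Type*} [DecidableEq σ] {R : Type*} [CommRing R]
    (s : σ) (f : MvPowerSeries σ R) : MvPowerSeries σ R :=
  fun m => (m s + 1 : ℕ) • MvPowerSeries.coeff (m + Finsupp.single s 1) f

section aux

set_option linter.unusedSectionVars false
variable {k : Type*} [Field k] [CharZero k]

/-- Formal integration with respect to the last variable. -/
noncomputable def mvInteg (h : MvPowerSeries (Fin 3) k) : MvPowerSeries (Fin 3) k :=
  fun m => if m 2 = 0 then 0 else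
    ((m 2 : k))⁻¹ * MvPowerSeries.coeff (m - Finsupp.single 2 1) h

lemma coeff_mvInteg (h : MvPowerSeries (Fin 3) k) (m : Fin 3 →₀ ℕ) :
    MvPowerSeries.coeff m (mvInteg h) = if m 2 = 0 then 0 else
      ((m 2 : k))⁻¹ * MvPowerSeries.coeff (m - Finsupp.single 2 1) h := rfl

lemma coeff_mvPderiv {σ : Type*} [DecidableEq σ] {R : Type*} [CommRing R]
    (s : σ) (h : MvPowerSeries σ R) (m : σ →₀ ℕ) :
    MvPowerSeries.coeff m (mvPderiv s h)
      = (m s + 1 : ℕ) • MvPowerSeries.coeff (m + Finsupp.single s 1) h := rfl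

lemma mvPderiv_mvInteg (h : MvPowerSeries (Fin 3) k) : mvPderiv 2 (mvInteg h) = h := by
  ext m
  rw [coeff_mvPderiv, coeff_mvInteg]
  have h2 : (m + Finsupp.single 2 1 : Fin 3 →₀ ℕ) 2 = m 2 + 1 := by simp
  rw [h2, if_neg (Nat.succ_ne_zero _)]
  have h3 : m + Finsupp.single 2 1 - Finsupp.single 2 1 = m := by simp
  rw [h3, nsmul_eq_mul]
  have : ((m 2 + 1 : ℕ) : k) ≠ 0 := Nat.cast_ne_zero.mpr (Nat.succ_ne_zero _)
  push_cast at this ⊢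
  field_simp

lemma coeff_sub_mvInteg_mvPderiv (w : MvPowerSeries (Fin 3) k) (m : Fin 3 →₀ ℕ)
    (hm : m 2 ≠ 0) :
    MvPowerSeries.coeff m (w - mvInteg (mvPderiv 2 w)) = 0 := by
  rw [map_sub, coeff_mvInteg, if_neg hm, coeff_mvPderiv]
  have hle : Finsupp.single (2 : Fin 3) 1 ≤ m := by
    rw [Finsupp.single_le_iff]; omega
  have h1 : (m - Finsupp.single 2 1 : Fin 3 →₀ ℕ) 2 = m 2 - 1 := by simp [Finsupp.tsub_apply]
  have h2 : m - Finsupp.single 2 1 + Finsupp.single 2 1 = m := tsub_add_cancel_of_le hle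
  rw [h1, h2, nsmul_eq_mul]
  have h3 : (m 2 - 1 + 1) = m 2 := by omega
  rw [h3]
  have : ((m 2 : ℕ) : k) ≠ 0 := Nat.cast_ne_zero.mpr hm
  field_simp
  simp

lemma mvInteg_monomial_mul (n : Fin 3 →₀ ℕ) (hn : n 2 = 0) (a : k)
    (h : MvPowerSeries (Fin 3) k) :
    mvInteg (MvPowerSeries.monomial n a * h)
      = MvPowerSeries.monomial n a * mvInteg h := by
  ext m
  rw [coeff_mvInteg, MvPowerSeries.coeff_monomial_mul, MvPowerSeries.coeff_monomial_mul]
  have hmn : (m - n : Fin 3 →₀ ℕ) 2 = m 2 := by simp [Finsupp.tsub_apply, hn]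
  by_cases hm : m 2 = 0
  · rw [if_pos hm]
    split_ifs with hle
    · rw [coeff_mvInteg, hmn, if_pos hm, mul_zero]
    · rfl
  · rw [if_neg hm]
    have hiff : n ≤ m - Finsupp.single 2 1 ↔ n ≤ m := by
      constructor
      · intro hle
        exact hle.trans tsub_le_self
      · intro hle
        intro i
        rcases eq_or_ne i 2 with rfl | hi
        · simp [Finsupp.tsub_apply, hn]
        · simpa [Finsupp.tsub_apply, Finsupp.single_apply, Ne.symm hi] using hle i
    split_ifs with h1 h2 h2
    · rw [coeff_mvInteg, hmn, if_neg hm]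
      have hcomm : m - Finsupp.single 2 1 - n = m - n - Finsupp.single 2 1 := by
        rw [tsub_tsub, tsub_tsub, add_comm]
      rw [hcomm]; ring
    · exact absurd (hiff.mp h1) h2
    · exact absurd (hiff.mpr h2) h1
    · rw [mul_zero]

end aux

/-- Let `k` be a field of characteristic zero and `w ∈ k⟦x,y,z⟧` with
`∂w/∂z = xᵉyᶠ·δ` for a unit `δ`.  Then `w = g(x,y) + xᵉyᶠ·z̃` where `g` is a power series
in `x, y` only and `z̃` has zero constant term and `∂z̃/∂z` a unit (so that `x, y, z̃` is a
regular system of parameters of `k⟦x,y,z⟧`). -/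
theorem exists_normal_form_of_pderiv_unit_monomial
    (k : Type*) [Field k] [CharZero k]
    (w δ : MvPowerSeries (Fin 3) k) (hδ : IsUnit δ) (e f : ℕ)
    (hw : mvPderiv 2 w = (MvPowerSeries.X 0) ^ e * (MvPowerSeries.X 1) ^ f * δ) :
    ∃ g ztil : MvPowerSeries (Fin 3) k,
      (∀ m : Fin 3 →₀ ℕ, m 2 ≠ 0 → MvPowerSeries.coeff m g = 0) ∧
      MvPowerSeries.constantCoeff ztil = 0 ∧
      IsUnit (mvPderiv 2 ztil) ∧
      w = g + (MvPowerSeries.X 0) ^ e * (MvPowerSeries.X 1) ^ f * ztil := by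
  refine ⟨w - mvInteg (mvPderiv 2 w), mvInteg δ, coeff_sub_mvInteg_mvPderiv w, ?_, ?_, ?_⟩
  · rw [← MvPowerSeries.coeff_zero_eq_constantCoeff_apply, coeff_mvInteg]
    simp
  · rw [mvPderiv_mvInteg]; exact hδ
  · have hmon : (MvPowerSeries.X 0 : MvPowerSeries (Fin 3) k) ^ e * MvPowerSeries.X 1 ^ f
        = MvPowerSeries.monomial (Finsupp.single 0 e + Finsupp.single 1 f) 1 := by
      rw [MvPowerSeries.X_pow_eq, MvPowerSeries.X_pow_eq,
        MvPowerSeries.monomial_mul_monomial, one_mul]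
    have hn2 : (Finsupp.single (0 : Fin 3) e + Finsupp.single 1 f : Fin 3 →₀ ℕ) 2 = 0 := by
      simp [Finsupp.single_apply]
    have : mvInteg (mvPderiv 2 w)
        = MvPowerSeries.X 0 ^ e * MvPowerSeries.X 1 ^ f * mvInteg δ := by
      rw [hw, hmon]
      exact mvInteg_monomial_mul _ hn2 1 δ
    rw [← this]; ring
end

section
/- Let k be an algebraically closed field of characteristic zero, let a, b, m be positive integers with gcd(a,b) = 1, and set u = (x^a y^b)^m and v = z in k⟦x,y,z⟧. Let w ∈ k⟦x,y,z⟧ be such that the formal Jacobian determinant of (u, v, w) with respect to (x, y, z) equals x^r y^s·δ for some natural numbers r, s and some unit δ. Then there exists a regular system of parameters x̄, ȳ, z of k⟦x,y,z⟧ with u = (x̄^a ȳ^b)^m (and v = z unchanged), natural numbers c, d with ad − bc ≠ 0, and a two-variable power series g, such that w = g(x̄^a ȳ^b, z) + x̄^c ȳ^d. -/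
open MvPowerSeries

/-- The formal Jacobian determinant of a triple of power series in three variables:
the determinant of the `3×3` matrix of formal partial derivatives. -/
noncomputable def mvJacobian {R : Type*} [CommRing R]
    (u v w : MvPowerSeries (Fin 3) R) : MvPowerSeries (Fin 3) R :=
  Matrix.det (Matrix.of fun i j => mvPderiv j (![u, v, w] i))

/-- Substitution of two power series `A, B` (of positive order) for the variables of a
two-variable power series `g`; the coefficient of `g(A,B)` at `m` is the (finitely
supported) sum of the contributions of the terms `g_{p₁,p₂} A^{p₁} B^{p₂}`. -/
noncomputable def subst2 {R : Type*} [CommRing R] (g : MvPowerSeries (Fin 2) R)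
    (A B : MvPowerSeries (Fin 3) R) : MvPowerSeries (Fin 3) R :=
  fun m => ∑ᶠ p : ℕ × ℕ,
    MvPowerSeries.coeff (Finsupp.single 0 p.1 + Finsupp.single 1 p.2) g *
      MvPowerSeries.coeff m (A ^ p.1 * B ^ p.2)

/-- A triple of elements of `k⟦x,y,z⟧` is a regular system of parameters if all three have
zero constant term (i.e. lie in the maximal ideal `m`) and their residues form a basis of
`m/m²`, equivalently the matrix of their linear coefficients is invertible. -/
def IsRegularSystem {k : Type*} [Field k] (a b c : MvPowerSeries (Fin 3) k) : Prop :=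
  MvPowerSeries.constantCoeff a = 0 ∧
  MvPowerSeries.constantCoeff b = 0 ∧
  MvPowerSeries.constantCoeff c = 0 ∧
  Matrix.det (Matrix.of fun i j =>
    MvPowerSeries.coeff (Finsupp.single j 1) (![a, b, c] i)) ≠ 0

section NF6aux
variable {k : Type*} [Field k]

lemma coeff_raw {σ : Type*} (f : MvPowerSeries σ k) (p : σ →₀ ℕ) :
    MvPowerSeries.coeff p f = f p := rfl

lemma fs_sub_add (n : Fin 3 →₀ ℕ) (s : Fin 3) (h : 1 ≤ n s) :
    n - Finsupp.single s 1 + Finsupp.single s 1 = n := by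
  ext i
  rw [Finsupp.add_apply, Finsupp.tsub_apply, Finsupp.single_apply]
  by_cases hi : s = i
  · subst hi; simp only [eq_self_iff_true, if_true]; omega
  · simp [hi]

lemma fs_add_sub (n : Fin 3 →₀ ℕ) (s : Fin 3) :
    n + Finsupp.single s 1 - Finsupp.single s 1 = n := by
  ext i
  rw [Finsupp.tsub_apply, Finsupp.add_apply, Finsupp.single_apply]
  by_cases hi : s = i
  · subst hi; simp only [eq_self_iff_true, if_true]; omega
  · simp [hi]

lemma fs_sub_apply_self (n : Fin 3 →₀ ℕ) (s : Fin 3) :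
    ((n - Finsupp.single s 1 : Fin 3 →₀ ℕ)) s = n s - 1 := by
  rw [Finsupp.tsub_apply, Finsupp.single_eq_same]

lemma coeff_mvPderiv_s8 (s : Fin 3) (f : MvPowerSeries (Fin 3) k) (m : Fin 3 →₀ ℕ) :
    MvPowerSeries.coeff m (mvPderiv s f) = (m s + 1 : ℕ) • MvPowerSeries.coeff (m + Finsupp.single s 1) f := rfl

lemma mvPderiv_monomial (s : Fin 3) (e : Fin 3 →₀ ℕ) :
    mvPderiv s (monomial e (1:k)) = (e s) • monomial (e - Finsupp.single s 1) 1 := by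
  ext m
  rw [coeff_mvPderiv_s8, map_nsmul, coeff_monomial, coeff_monomial]
  by_cases h1 : 1 ≤ e s
  · by_cases h2 : m = e - Finsupp.single s 1
    · have hms : m + Finsupp.single s 1 = e := by
        subst h2; exact fs_sub_add e s h1
      have hval : m s + 1 = e s := by
        subst h2; rw [fs_sub_apply_self]; omega
      rw [if_pos hms, if_pos h2, hval]
    · rw [if_neg, if_neg h2]
      · simp
      · intro hme
        exact h2 (by rw [← hme, fs_add_sub])
  · have hes : e s = 0 := by omega
    rw [hes, zero_smul, if_neg]
    · simp
    · intro hme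
      have := congrArg (fun f => f s) hme
      simp only [Finsupp.add_apply, Finsupp.single_eq_same, hes] at this
      omega

lemma coeff_X_mul_mvPderiv (s : Fin 3) (f : MvPowerSeries (Fin 3) k) (n : Fin 3 →₀ ℕ) :
    MvPowerSeries.coeff n (MvPowerSeries.X s * mvPderiv s f)
      = (n s : k) * MvPowerSeries.coeff n f := by
  rw [MvPowerSeries.X, coeff_monomial_mul]
  by_cases h : (Finsupp.single s 1 : Fin 3 →₀ ℕ) ≤ n
  · have h1 : 1 ≤ n s := by rwa [Finsupp.single_le_iff] at h
    rw [if_pos h, coeff_mvPderiv_s8, fs_sub_add n s h1, fs_sub_apply_self, one_mul, nsmul_eq_mul]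
    congr 1
    push_cast [Nat.sub_add_cancel h1]
    ring
  · have h1 : n s = 0 := by
      by_contra hne
      exact h (Finsupp.single_le_iff.mpr (by omega))
    rw [if_neg h, h1]
    simp

lemma jacobian_formula (a b m : ℕ) (ha : 1 ≤ a*m) (hb : 1 ≤ b*m) (w : MvPowerSeries (Fin 3) k) :
    mvJacobian ((((MvPowerSeries.X 0 : MvPowerSeries (Fin 3) k))^a * (MvPowerSeries.X 1)^b)^m)
      (MvPowerSeries.X 2) w
    = monomial (Finsupp.single 0 (a*m-1) + Finsupp.single 1 (b*m-1)) 1 *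
      ((b*m) • (MvPowerSeries.X 0 * mvPderiv 0 w) - (a*m) • (MvPowerSeries.X 1 * mvPderiv 1 w)) := by
  classical
  set E : Fin 3 →₀ ℕ := Finsupp.single 0 (a*m) + Finsupp.single 1 (b*m) with hE
  set F : Fin 3 →₀ ℕ := Finsupp.single 0 (a*m-1) + Finsupp.single 1 (b*m-1) with hF
  have hum : (((MvPowerSeries.X 0 : MvPowerSeries (Fin 3) k))^a * (MvPowerSeries.X 1)^b)^m
      = monomial E 1 := by
    rw [mul_pow, ← pow_mul, ← pow_mul, X_pow_eq, X_pow_eq, monomial_mul_monomial, one_mul]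
  have hXv : (MvPowerSeries.X 2 : MvPowerSeries (Fin 3) k) = monomial (Finsupp.single 2 1) 1 := rfl
  have hv0 : mvPderiv 0 (MvPowerSeries.X 2 : MvPowerSeries (Fin 3) k) = 0 := by
    rw [hXv, mvPderiv_monomial, Finsupp.single_eq_of_ne (by decide), zero_smul]
  have hv1 : mvPderiv 1 (MvPowerSeries.X 2 : MvPowerSeries (Fin 3) k) = 0 := by
    rw [hXv, mvPderiv_monomial, Finsupp.single_eq_of_ne (by decide), zero_smul]
  have hv2 : mvPderiv 2 (MvPowerSeries.X 2 : MvPowerSeries (Fin 3) k) = 1 := by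
    rw [hXv, mvPderiv_monomial, Finsupp.single_eq_same, tsub_self, one_smul, monomial_zero_one]
  have hE2 : E 2 = 0 := by
    rw [hE, Finsupp.add_apply, Finsupp.single_eq_of_ne (by decide),
      Finsupp.single_eq_of_ne (by decide), add_zero]
  have hE0 : E 0 = a*m := by
    rw [hE, Finsupp.add_apply, Finsupp.single_eq_same, Finsupp.single_eq_of_ne (by decide),
      add_zero]
  have hE1 : E 1 = b*m := by
    rw [hE, Finsupp.add_apply, Finsupp.single_eq_same, Finsupp.single_eq_of_ne (by decide),
      zero_add]
  have hu2 : mvPderiv 2 (monomial E (1:k)) = 0 := by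
    rw [mvPderiv_monomial, hE2, zero_smul]
  have hu0 : mvPderiv 0 (monomial E (1:k)) = (a*m) • monomial (E - Finsupp.single 0 1) 1 := by
    rw [mvPderiv_monomial, hE0]
  have hu1 : mvPderiv 1 (monomial E (1:k)) = (b*m) • monomial (E - Finsupp.single 1 1) 1 := by
    rw [mvPderiv_monomial, hE1]
  have hF0 : monomial F (1:k) * MvPowerSeries.X 0 = monomial (E - Finsupp.single 1 1) 1 := by
    rw [show (MvPowerSeries.X 0 : MvPowerSeries (Fin 3) k) = monomial (Finsupp.single 0 1) 1 from rfl,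
      monomial_mul_monomial, one_mul]
    have : F + Finsupp.single 0 1 = E - Finsupp.single 1 1 := by
      apply Finsupp.ext
      intro i
      rw [Finsupp.add_apply, hF, Finsupp.add_apply, Finsupp.tsub_apply, hE, Finsupp.add_apply]
      fin_cases i <;> simp [Finsupp.single_apply, Fin.ext_iff] <;> omega
    rw [this]
  have hF1 : monomial F (1:k) * MvPowerSeries.X 1 = monomial (E - Finsupp.single 0 1) 1 := by
    rw [show (MvPowerSeries.X 1 : MvPowerSeries (Fin 3) k) = monomial (Finsupp.single 1 1) 1 from rfl,
      monomial_mul_monomial, one_mul]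
    have : F + Finsupp.single 1 1 = E - Finsupp.single 0 1 := by
      apply Finsupp.ext
      intro i
      rw [Finsupp.add_apply, hF, Finsupp.add_apply, Finsupp.tsub_apply, hE, Finsupp.add_apply]
      fin_cases i <;> simp [Finsupp.single_apply, Fin.ext_iff] <;> omega
    rw [this]
  unfold mvJacobian
  rw [Matrix.det_fin_three]
  simp only [Matrix.of_apply, Matrix.cons_val', Matrix.cons_val_zero, Matrix.cons_val_one,
    Matrix.head_cons, Matrix.empty_val', Matrix.cons_val_fin_one, Matrix.head_fin_const,
    Matrix.cons_val_two, Matrix.tail_cons]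
  rw [hum, hu0, hu1, hu2, hv0, hv1, hv2]
  rw [mul_sub, mul_smul_comm, mul_smul_comm, ← mul_assoc, ← mul_assoc, hF0, hF1]
  simp only [smul_mul_assoc, nsmul_eq_mul]
  ring

/-- degree of an exponent -/
def degJ (n : Fin 3 →₀ ℕ) : ℕ := n 0 + n 1 + n 2

lemma degJ_mono {p q : Fin 3 →₀ ℕ} (h : p ≤ q) : degJ p ≤ degJ q := by
  have h0 := h 0; have h1 := h 1; have h2 := h 2
  unfold degJ; omega

lemma degJ_add (p q : Fin 3 →₀ ℕ) : degJ (p + q) = degJ p + degJ q := by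
  unfold degJ
  simp only [Finsupp.add_apply]; ring

lemma degJ_eq_zero {p : Fin 3 →₀ ℕ} (h : degJ p = 0) : p = 0 := by
  apply Finsupp.ext
  intro i
  unfold degJ at h
  fin_cases i <;> simp <;> omega

/-- ideal of series all of whose coefficients in degree < N vanish -/
def lowIdeal (k : Type*) [Field k] (N : ℕ) : Ideal (MvPowerSeries (Fin 3) k) where
  carrier := {f | ∀ p : Fin 3 →₀ ℕ, degJ p < N → MvPowerSeries.coeff p f = 0}
  add_mem' := by intro f g hf hg p hp; rw [map_add, hf p hp, hg p hp, add_zero]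
  zero_mem' := by intro p hp; simp
  smul_mem' := by
    intro c f hf p hp
    rw [smul_eq_mul, MvPowerSeries.coeff_mul]
    apply Finset.sum_eq_zero
    rintro ⟨p1, p2⟩ hpq
    have hle : p2 ≤ p := by
      rw [Finset.HasAntidiagonal.mem_antidiagonal] at hpq
      rw [← hpq]
      exact le_add_self
    have : degJ p2 < N := lt_of_le_of_lt (degJ_mono hle) hp
    rw [hf p2 this, mul_zero]

lemma mem_lowIdeal_iff {N : ℕ} {f : MvPowerSeries (Fin 3) k} :
    f ∈ lowIdeal k N ↔ ∀ p : Fin 3 →₀ ℕ, degJ p < N → MvPowerSeries.coeff p f = 0 :=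
  Iff.rfl

/-- the maximal ideal (span of variables) -/
noncomputable def mIdeal (k : Type*) [Field k] : Ideal (MvPowerSeries (Fin 3) k) :=
  Ideal.span (Set.range (MvPowerSeries.X : Fin 3 → MvPowerSeries (Fin 3) k))

lemma lowIdeal_mul_le (M N : ℕ) : lowIdeal k M * lowIdeal k N ≤ lowIdeal k (M + N) := by
  rw [Ideal.mul_le]
  intro f hf g hg
  intro p hp
  rw [MvPowerSeries.coeff_mul]
  apply Finset.sum_eq_zero
  rintro ⟨p1, p2⟩ hpq
  rw [Finset.HasAntidiagonal.mem_antidiagonal] at hpq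
  have hd : degJ p1 + degJ p2 < M + N := by rw [← degJ_add, hpq]; exact hp
  by_cases h1 : degJ p1 < M
  · rw [hf p1 h1, zero_mul]
  · have : degJ p2 < N := by omega
    rw [hg p2 this, mul_zero]

lemma mIdeal_le_lowIdeal_one : mIdeal k ≤ lowIdeal k 1 := by
  rw [mIdeal, Ideal.span_le]
  rintro _ ⟨i, rfl⟩
  intro p hp
  have hp0 : p = 0 := degJ_eq_zero (by omega)
  subst hp0
  rw [show (MvPowerSeries.X i : MvPowerSeries (Fin 3) k) = monomial (Finsupp.single i 1) 1 from rfl,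
    coeff_monomial, if_neg]
  intro h
  have := congrArg (fun f : Fin 3 →₀ ℕ => f i) h
  simp at this

lemma mIdeal_pow_le (N : ℕ) : (mIdeal k) ^ N ≤ lowIdeal k N := by
  induction N with
  | zero => intro f _ p hp; omega
  | succ n ih =>
    rw [pow_succ]
    calc (mIdeal k) ^ n * mIdeal k ≤ lowIdeal k n * lowIdeal k 1 :=
          Ideal.mul_mono ih mIdeal_le_lowIdeal_one
      _ ≤ lowIdeal k (n + 1) := lowIdeal_mul_le n 1

lemma coeff_apply' (f : MvPowerSeries (Fin 3) k) (p : Fin 3 →₀ ℕ) :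
    MvPowerSeries.coeff p f = f p := rfl

lemma lowIdeal_le_pow (N : ℕ) : lowIdeal k N ≤ (mIdeal k) ^ N := by
  induction N with
  | zero => intro f _; rw [pow_zero, Ideal.one_eq_top]; trivial
  | succ n ih =>
    intro f hf
    rw [mem_lowIdeal_iff] at hf
    set f0 : MvPowerSeries (Fin 3) k := fun p => f (p + Finsupp.single 0 1) with hf0
    set f1 : MvPowerSeries (Fin 3) k :=
      fun p => if p 0 = 0 then f (p + Finsupp.single 1 1) else 0 with hf1
    set f2 : MvPowerSeries (Fin 3) k :=
      fun p => if p 0 = 0 ∧ p 1 = 0 then f (p + Finsupp.single 2 1) else 0 with hf2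
    have hX : ∀ (s : Fin 3) (g : MvPowerSeries (Fin 3) k) (p : Fin 3 →₀ ℕ),
        MvPowerSeries.coeff p (MvPowerSeries.X s * g)
          = if Finsupp.single s 1 ≤ p then MvPowerSeries.coeff (p - Finsupp.single s 1) g
            else 0 := by
      intro s g p
      rw [show (MvPowerSeries.X s : MvPowerSeries (Fin 3) k) = monomial (Finsupp.single s 1) 1 from rfl,
        coeff_monomial_mul]
      split <;> simp
    have hsum : f = MvPowerSeries.X 0 * f0 + MvPowerSeries.X 1 * f1 + MvPowerSeries.X 2 * f2 := by
      ext p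
      rw [map_add, map_add, hX, hX, hX]
      have e0 : ∀ s : Fin 3, (Finsupp.single s 1 ≤ p) ↔ 1 ≤ p s := by
        intro s; exact Finsupp.single_le_iff
      by_cases h0 : 1 ≤ p 0
      · rw [if_pos ((e0 0).mpr h0)]
        have hps : p - Finsupp.single 0 1 + Finsupp.single 0 1 = p := by
          apply Finsupp.ext; intro i
          rw [Finsupp.add_apply, Finsupp.tsub_apply]
          rcases eq_or_ne i 0 with rfl | hne
          · simp only [Finsupp.single_eq_same]; omega
          · rw [Finsupp.single_eq_of_ne hne]; omega
        have : MvPowerSeries.coeff (p - Finsupp.single 0 1) f0 = MvPowerSeries.coeff p f := by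
          rw [coeff_apply', coeff_apply', hf0]
          show f ((p - Finsupp.single 0 1) + Finsupp.single 0 1) = f p
          rw [hps]
        rw [this]
        -- other two terms vanish
        have z1 : (if Finsupp.single 1 1 ≤ p then MvPowerSeries.coeff (p - Finsupp.single 1 1) f1 else 0) = 0 := by
          split
          · rw [coeff_apply', hf1]
            have : (p - Finsupp.single 1 1 : Fin 3 →₀ ℕ) 0 = p 0 := by
              rw [Finsupp.tsub_apply, Finsupp.single_eq_of_ne (by decide)]; omega
            simp only [this]
            rw [if_neg (by omega)]
          · rfl
        have z2 : (if Finsupp.single 2 1 ≤ p then MvPowerSeries.coeff (p - Finsupp.single 2 1) f2 else 0) = 0 := by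
          split
          · rw [coeff_apply', hf2]
            beta_reduce
            have : (p - Finsupp.single 2 1 : Fin 3 →₀ ℕ) 0 = p 0 := by
              rw [Finsupp.tsub_apply, Finsupp.single_eq_of_ne (by decide)]; omega
            rw [if_neg (by omega)]
          · rfl
        rw [z1, z2, add_zero, add_zero]
      · rw [if_neg (by rw [e0 0]; omega), zero_add]
        by_cases h1 : 1 ≤ p 1
        · rw [if_pos ((e0 1).mpr h1)]
          have hq0 : (p - Finsupp.single 1 1 : Fin 3 →₀ ℕ) 0 = 0 := by
            rw [Finsupp.tsub_apply, Finsupp.single_eq_of_ne (by decide)]; omega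
          have hps : p - Finsupp.single 1 1 + Finsupp.single 1 1 = p := by
            apply Finsupp.ext; intro i
            rw [Finsupp.add_apply, Finsupp.tsub_apply]
            rcases eq_or_ne i 1 with rfl | hne
            · simp only [Finsupp.single_eq_same]; omega
            · rw [Finsupp.single_eq_of_ne hne]; omega
          have : MvPowerSeries.coeff (p - Finsupp.single 1 1) f1 = MvPowerSeries.coeff p f := by
            rw [coeff_apply', coeff_apply', hf1]
            show (if _ then f ((p - Finsupp.single 1 1) + Finsupp.single 1 1) else 0) = f p
            rw [if_pos hq0, hps]
          rw [this]
          have z2 : (if Finsupp.single 2 1 ≤ p then MvPowerSeries.coeff (p - Finsupp.single 2 1) f2 else 0) = 0 := by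
            split
            · rw [coeff_apply', hf2]
              beta_reduce
              have : (p - Finsupp.single 2 1 : Fin 3 →₀ ℕ) 1 = p 1 := by
                rw [Finsupp.tsub_apply, Finsupp.single_eq_of_ne (by decide)]; omega
              rw [if_neg (by omega)]
            · rfl
          rw [z2, add_zero]
        · rw [if_neg (by rw [e0 1]; omega), zero_add]
          by_cases h2 : 1 ≤ p 2
          · rw [if_pos ((e0 2).mpr h2)]
            have hq0 : (p - Finsupp.single 2 1 : Fin 3 →₀ ℕ) 0 = 0 := by
              rw [Finsupp.tsub_apply, Finsupp.single_eq_of_ne (by decide)]; omega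
            have hq1 : (p - Finsupp.single 2 1 : Fin 3 →₀ ℕ) 1 = 0 := by
              rw [Finsupp.tsub_apply, Finsupp.single_eq_of_ne (by decide)]; omega
            have hps : p - Finsupp.single 2 1 + Finsupp.single 2 1 = p := by
              apply Finsupp.ext; intro i
              rw [Finsupp.add_apply, Finsupp.tsub_apply]
              rcases eq_or_ne i 2 with rfl | hne
              · simp only [Finsupp.single_eq_same]; omega
              · rw [Finsupp.single_eq_of_ne hne]; omega
            rw [coeff_apply', coeff_apply', hf2]
            beta_reduce
            rw [if_pos ⟨hq0, hq1⟩, hps]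
          · rw [if_neg (by rw [e0 2]; omega)]
            have hp0 : p = 0 := by
              apply Finsupp.ext; intro i; fin_cases i <;> simp <;> omega
            subst hp0
            exact hf 0 (by simp [degJ])
    have hmem : ∀ (s : Fin 3) (g : MvPowerSeries (Fin 3) k)
        (hg : ∀ p : Fin 3 →₀ ℕ, degJ p < n → MvPowerSeries.coeff p g = 0),
        MvPowerSeries.X s * g ∈ (mIdeal k) ^ (n+1) := by
      intro s g hg
      rw [pow_succ, mul_comm ((mIdeal k)^n) (mIdeal k)]
      exact Ideal.mul_mem_mul (Ideal.subset_span ⟨s, rfl⟩) (ih hg)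
    rw [hsum]
    refine Ideal.add_mem _ (Ideal.add_mem _ (hmem 0 f0 ?_) (hmem 1 f1 ?_)) (hmem 2 f2 ?_)
    · intro p hp
      rw [coeff_apply', hf0]
      show f (p + Finsupp.single 0 1) = 0
      apply hf
      rw [degJ_add]
      have : degJ (Finsupp.single (0:Fin 3) 1) = 1 := by unfold degJ; simp
      omega
    · intro p hp
      rw [coeff_apply', hf1]
      show (if p 0 = 0 then f (p + Finsupp.single 1 1) else 0) = 0
      split
      · apply hf
        rw [degJ_add]
        have : degJ (Finsupp.single (1:Fin 3) 1) = 1 := by unfold degJ; simp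
        omega
      · rfl
    · intro p hp
      rw [coeff_apply', hf2]
      show (if p 0 = 0 ∧ p 1 = 0 then f (p + Finsupp.single 2 1) else 0) = 0
      split
      · apply hf
        rw [degJ_add]
        have : degJ (Finsupp.single (2:Fin 3) 1) = 1 := by unfold degJ; simp
        omega
      · rfl

lemma degJ_zero_iff {p : Fin 3 →₀ ℕ} : degJ p = 0 → p = 0 := by
  intro h
  apply Finsupp.ext; intro i
  unfold degJ at h
  fin_cases i <;> simp <;> omega

lemma mem_mIdeal_of_constantCoeff {f : MvPowerSeries (Fin 3) k}
    (h : MvPowerSeries.constantCoeff f = 0) : f ∈ mIdeal k := by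
  have := lowIdeal_le_pow (k := k) 1
  rw [pow_one] at this
  apply this
  rw [mem_lowIdeal_iff]
  intro p hp
  have hp0 : p = 0 := degJ_zero_iff (by omega)
  subst hp0
  rw [coeff_zero_eq_constantCoeff]
  exact h

lemma mIdeal_adic_complete : IsAdicComplete (mIdeal k) (MvPowerSeries (Fin 3) k) := by
  refine { toIsHausdorff := ⟨?_⟩, toIsPrecomplete := ⟨?_⟩ }
  · intro x hx
    ext p
    have := hx (degJ p + 1)
    rw [SModEq.zero] at this
    have hmem : x ∈ lowIdeal k (degJ p + 1) := by
      apply mIdeal_pow_le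
      rwa [Ideal.smul_eq_mul, Ideal.mul_top] at this
    rw [map_zero]
    exact (mem_lowIdeal_iff.mp hmem) p (by omega)
  · intro f hf
    set L : MvPowerSeries (Fin 3) k := fun p => MvPowerSeries.coeff p (f (degJ p + 1)) with hL
    refine ⟨L, ?_⟩
    intro n
    rw [SModEq.sub_mem, Ideal.smul_eq_mul, Ideal.mul_top]
    apply lowIdeal_le_pow
    rw [mem_lowIdeal_iff]
    intro p hp
    rw [map_sub]
    have h1 : f (degJ p + 1) - f n ∈ lowIdeal k (degJ p + 1) := by
      apply mIdeal_pow_le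
      have := hf (show degJ p + 1 ≤ n by omega)
      rw [SModEq.sub_mem, Ideal.smul_eq_mul, Ideal.mul_top] at this
      exact this
    have h2 := (mem_lowIdeal_iff.mp h1) p (by omega)
    rw [map_sub] at h2
    have : MvPowerSeries.coeff p L
        = MvPowerSeries.coeff p (f (degJ p + 1)) := rfl
    rw [this]
    linear_combination -h2

lemma exists_root [IsAlgClosed k] [CharZero k] (N : ℕ) (hN : 0 < N)
    (ε : MvPowerSeries (Fin 3) k) (hε : IsUnit ε) :
    ∃ η : MvPowerSeries (Fin 3) k, η ^ N = ε ∧ IsUnit η := by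
  classical
  haveI := mIdeal_adic_complete (k := k)
  set ε₀ := MvPowerSeries.constantCoeff ε with hε₀def
  have hε₀ : ε₀ ≠ 0 := by
    have := (MvPowerSeries.isUnit_iff_constantCoeff).mp hε
    exact this.ne_zero
  obtain ⟨c, hc⟩ := IsAlgClosed.exists_pow_nat_eq ε₀ hN
  have hcne : c ≠ 0 := by
    intro h; apply hε₀; rw [← hc, h, zero_pow (by omega)]
  set f : Polynomial (MvPowerSeries (Fin 3) k) := Polynomial.X ^ N - Polynomial.C ε with hfdef
  have hmonic : f.Monic := Polynomial.monic_X_pow_sub_C ε (by omega)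
  set a₀ : MvPowerSeries (Fin 3) k := MvPowerSeries.C c with ha₀
  have heval : f.eval a₀ = a₀ ^ N - ε := by
    rw [hfdef, Polynomial.eval_sub, Polynomial.eval_pow, Polynomial.eval_X, Polynomial.eval_C]
  have h₁ : f.eval a₀ ∈ mIdeal k := by
    rw [heval]
    apply mem_mIdeal_of_constantCoeff
    rw [map_sub, map_pow]
    have : MvPowerSeries.constantCoeff a₀ = c := by
      rw [ha₀, MvPowerSeries.constantCoeff_C]
    rw [this, hc]
    exact sub_self _
  have h₂ : IsUnit ((Ideal.Quotient.mk (mIdeal k)) (f.derivative.eval a₀)) := by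
    have hder : f.derivative = Polynomial.C (N : MvPowerSeries (Fin 3) k) * Polynomial.X ^ (N-1) := by
      rw [hfdef, Polynomial.derivative_sub, Polynomial.derivative_C, sub_zero,
        Polynomial.derivative_X_pow]
    have : f.derivative.eval a₀ = (N : MvPowerSeries (Fin 3) k) * a₀ ^ (N - 1) := by
      rw [hder, Polynomial.eval_mul, Polynomial.eval_C, Polynomial.eval_pow, Polynomial.eval_X]
    rw [this]
    apply IsUnit.map
    apply IsUnit.mul
    · rw [MvPowerSeries.isUnit_iff_constantCoeff, map_natCast]
      exact (Nat.cast_ne_zero.mpr (by omega)).isUnit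
    · apply IsUnit.pow
      rw [MvPowerSeries.isUnit_iff_constantCoeff, ha₀, MvPowerSeries.constantCoeff_C]
      exact hcne.isUnit
  obtain ⟨η, hroot, -⟩ := HenselianRing.is_henselian f hmonic a₀ h₁ h₂
  refine ⟨η, ?_, ?_⟩
  · have : f.eval η = 0 := hroot
    rw [hfdef, Polynomial.eval_sub, Polynomial.eval_pow, Polynomial.eval_X,
      Polynomial.eval_C, sub_eq_zero] at this
    exact this
  · have hpow : η ^ N = ε := by
      have : f.eval η = 0 := hroot
      rw [hfdef, Polynomial.eval_sub, Polynomial.eval_pow, Polynomial.eval_X,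
        Polynomial.eval_C, sub_eq_zero] at this
      exact this
    have : IsUnit (η ^ N) := hpow ▸ hε
    exact (isUnit_pow_iff (by omega : N ≠ 0)).mp this

lemma exists_zpow_root [IsAlgClosed k] [CharZero k] (N : ℤ) (hN : N ≠ 0)
    (ε : (MvPowerSeries (Fin 3) k)ˣ) :
    ∃ η : (MvPowerSeries (Fin 3) k)ˣ, η ^ N = ε := by
  rcases lt_or_gt_of_ne hN with hneg | hpos
  · obtain ⟨η, hη, hu⟩ := exists_root (-N).toNat (by omega) ((ε⁻¹ : (MvPowerSeries (Fin 3) k)ˣ) : MvPowerSeries (Fin 3) k) (Units.isUnit _)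
    obtain ⟨ηu, rfl⟩ := hu
    have h1 : ηu ^ ((-N).toNat) = ε⁻¹ := by
      apply Units.ext
      rw [← hη]
      simp
    refine ⟨ηu, ?_⟩
    have h2 : ηu ^ (-N) = ε⁻¹ := by
      rw [← h1, ← zpow_natCast, Int.toNat_of_nonneg (by omega)]
    calc ηu ^ N = (ηu ^ (-N))⁻¹ := by rw [← zpow_neg, neg_neg]
      _ = (ε⁻¹)⁻¹ := by rw [h2]
      _ = ε := inv_inv ε
  · obtain ⟨η, hη, hu⟩ := exists_root N.toNat (by omega) (ε : MvPowerSeries (Fin 3) k) (Units.isUnit _)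
    obtain ⟨ηu, rfl⟩ := hu
    have h1 : ηu ^ (N.toNat) = ε := by
      apply Units.ext
      rw [← hη]
      simp
    refine ⟨ηu, ?_⟩
    rw [← h1, ← zpow_natCast, Int.toNat_of_nonneg (by omega)]


end NF6aux

/-- Case 6 of Lemma 3.2: if `u = (x^a y^b)^m`, `v = z` with `gcd(a,b) = 1` and the Jacobian
determinant of `(u,v,w)` is a monomial `x^r y^s` times a unit, then after a change of
regular parameters `x̄, ȳ` (fixing `z`) with `u = (x̄^a ȳ^b)^m`, one has
`w = g(x̄^a ȳ^b, z) + x̄^c ȳ^d` with `ad − bc ≠ 0`. -/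
theorem normal_form_case6
    (k : Type*) [Field k] [IsAlgClosed k] [CharZero k]
    (a b m : ℕ) (ha : 0 < a) (hb : 0 < b) (hm : 0 < m) (hab : Nat.gcd a b = 1)
    (u v w : MvPowerSeries (Fin 3) k)
    (hu : u = ((MvPowerSeries.X 0) ^ a * (MvPowerSeries.X 1) ^ b) ^ m)
    (hv : v = (MvPowerSeries.X 2 : MvPowerSeries (Fin 3) k))
    (r s : ℕ) (δ : MvPowerSeries (Fin 3) k) (hδ : IsUnit δ)
    (hJ : mvJacobian u v w = (MvPowerSeries.X 0) ^ r * (MvPowerSeries.X 1) ^ s * δ) :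
    ∃ (xbar ybar : MvPowerSeries (Fin 3) k) (c d : ℕ) (g : MvPowerSeries (Fin 2) k),
      IsRegularSystem xbar ybar (MvPowerSeries.X 2) ∧
      u = (xbar ^ a * ybar ^ b) ^ m ∧
      (a : ℤ) * d - (b : ℤ) * c ≠ 0 ∧
      w = subst2 g (xbar ^ a * ybar ^ b) (MvPowerSeries.X 2) + xbar ^ c * ybar ^ d := by
  classical
  subst hu hv
  have ham : 1 ≤ a * m := Nat.mul_pos ha hm
  have hbm : 1 ≤ b * m := Nat.mul_pos hb hm
  rw [jacobian_formula a b m ham hbm w] at hJ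
  set F : Fin 3 →₀ ℕ := Finsupp.single 0 (a*m-1) + Finsupp.single 1 (b*m-1) with hF
  set G : Fin 3 →₀ ℕ := Finsupp.single 0 r + Finsupp.single 1 s with hG
  set W := (b*m) • (MvPowerSeries.X 0 * mvPderiv 0 w)
    - (a*m) • (MvPowerSeries.X 1 * mvPderiv 1 w) with hW
  have hRHS : (MvPowerSeries.X 0 : MvPowerSeries (Fin 3) k)^r * (MvPowerSeries.X 1)^s * δ
      = monomial G 1 * δ := by
    rw [X_pow_eq, X_pow_eq, monomial_mul_monomial, one_mul]
  rw [hRHS] at hJ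
  have hδ0 : MvPowerSeries.constantCoeff δ ≠ 0 :=
    ((isUnit_iff_constantCoeff).mp hδ).ne_zero
  have hWc : ∀ n : Fin 3 →₀ ℕ, MvPowerSeries.coeff n W
      = (m : k) * ((b : k) * (n 0) - (a : k) * (n 1)) * MvPowerSeries.coeff n w := by
    intro n
    rw [hW, map_sub, map_nsmul, map_nsmul, coeff_X_mul_mvPderiv, coeff_X_mul_mvPderiv,
      nsmul_eq_mul, nsmul_eq_mul]
    push_cast
    ring
  have hcoeffG := congrArg (MvPowerSeries.coeff G) hJ
  rw [coeff_monomial_mul, coeff_monomial_mul, if_pos le_rfl, tsub_self,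
    coeff_zero_eq_constantCoeff, one_mul] at hcoeffG
  have hFG : F ≤ G := by
    by_contra hFG
    rw [if_neg hFG, one_mul] at hcoeffG
    exact hδ0 hcoeffG.symm
  have hFap0 : F 0 = a*m - 1 := by
    rw [hF, Finsupp.add_apply, Finsupp.single_eq_same, Finsupp.single_eq_of_ne (by decide),
      add_zero]
  have hFap1 : F 1 = b*m - 1 := by
    rw [hF, Finsupp.add_apply, Finsupp.single_eq_same, Finsupp.single_eq_of_ne (by decide),
      zero_add]
  have hGap0 : G 0 = r := by
    rw [hG, Finsupp.add_apply, Finsupp.single_eq_same, Finsupp.single_eq_of_ne (by decide),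
      add_zero]
  have hGap1 : G 1 = s := by
    rw [hG, Finsupp.add_apply, Finsupp.single_eq_same, Finsupp.single_eq_of_ne (by decide),
      zero_add]
  have hr : a*m - 1 ≤ r := by
    have := hFG 0; rwa [hFap0, hGap0] at this
  have hs : b*m - 1 ≤ s := by
    have := hFG 1; rwa [hFap1, hGap1] at this
  set cc := r - (a*m - 1) with hcc
  set dd := s - (b*m - 1) with hdd
  set D : Fin 3 →₀ ℕ := Finsupp.single 0 cc + Finsupp.single 1 dd with hD
  have hD0 : D 0 = cc := by
    rw [hD, Finsupp.add_apply, Finsupp.single_eq_same, Finsupp.single_eq_of_ne (by decide),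
      add_zero]
  have hD1 : D 1 = dd := by
    rw [hD, Finsupp.add_apply, Finsupp.single_eq_same, Finsupp.single_eq_of_ne (by decide),
      zero_add]
  have hFD : F + D = G := by
    apply Finsupp.ext; intro i
    fin_cases i <;>
      simp only [Finsupp.add_apply, hF, hG, hD, Finsupp.single_apply, Fin.ext_iff] <;>
      norm_num <;> omega
  have hmono : (monomial F 1 : MvPowerSeries (Fin 3) k) ≠ 0 := by
    intro h0
    have := congrArg (MvPowerSeries.coeff F) h0
    rw [coeff_monomial_same, map_zero] at this
    exact one_ne_zero this
  have hQ : W = monomial D 1 * δ := by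
    apply mul_left_cancel₀ hmono
    rw [hJ, ← mul_assoc, monomial_mul_monomial, one_mul, hFD]
  have hkeyAll : ∀ n : Fin 3 →₀ ℕ,
      (m:k) * ((b:k)*(n 0) - (a:k)*(n 1)) * MvPowerSeries.coeff n w
      = if D ≤ n then MvPowerSeries.coeff (n - D) δ else 0 := by
    intro n
    rw [← hWc n, hQ, coeff_monomial_mul]
    split <;> simp
  have hkeyD := hkeyAll D
  rw [if_pos le_rfl, tsub_self, coeff_zero_eq_constantCoeff, hD0, hD1] at hkeyD
  have hmne : (m : k) ≠ 0 := Nat.cast_ne_zero.mpr (by omega)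
  have hfac : ((b:k)*cc - (a:k)*dd) ≠ 0 := by
    intro h
    rw [h, mul_zero, zero_mul] at hkeyD
    exact hδ0 hkeyD.symm
  have hwD : MvPowerSeries.coeff D w ≠ 0 := by
    intro h
    rw [h, mul_zero] at hkeyD
    exact hδ0 hkeyD.symm
  have hADZ : (a:ℤ) * dd - (b:ℤ) * cc ≠ 0 := by
    intro h
    apply hfac
    have h1 : (a:ℤ) * dd = (b:ℤ) * cc := by linarith
    have h2 : a * dd = b * cc := by exact_mod_cast h1
    have h3 : ((b * cc : ℕ) : k) = ((a * dd : ℕ) : k) := by rw [← h2]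
    push_cast at h3
    rw [sub_eq_zero]
    exact h3
  have hbcdd : b * cc ≠ a * dd := by
    intro h
    apply hfac
    have h3 : ((b * cc : ℕ) : k) = ((a * dd : ℕ) : k) := by rw [h]
    push_cast at h3
    rw [sub_eq_zero]
    exact h3
  have hBneq : ∀ n : Fin 3 →₀ ℕ, ¬ (D ≤ n) → b * (n 0) ≠ a * (n 1) →
      MvPowerSeries.coeff n w = 0 := by
    intro n hn hne
    have hk := hkeyAll n
    rw [if_neg hn] at hk
    have hmid : ((b:k)*(n 0) - (a:k)*(n 1)) ≠ 0 := by
      intro h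
      apply hne
      have h3 : ((b * n 0 : ℕ) : k) = ((a * n 1 : ℕ) : k) := by
        push_cast
        exact sub_eq_zero.mp h
      exact_mod_cast h3
    exact (mul_eq_zero.mp hk).resolve_left (mul_ne_zero hmne hmid)
  -- the diagonal part
  set A := (MvPowerSeries.X 0 : MvPowerSeries (Fin 3) k)^a * (MvPowerSeries.X 1)^b with hA
  set T : ℕ × ℕ → (Fin 3 →₀ ℕ) := fun p =>
    Finsupp.single 0 (a * p.1) + Finsupp.single 1 (b * p.1) + Finsupp.single 2 p.2 with hT
  have hT0 : ∀ p : ℕ × ℕ, (T p) 0 = a * p.1 := by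
    intro p
    rw [hT]; beta_reduce
    rw [Finsupp.add_apply, Finsupp.add_apply, Finsupp.single_eq_same,
      Finsupp.single_eq_of_ne (by decide), Finsupp.single_eq_of_ne (by decide)]
    omega
  have hT1 : ∀ p : ℕ × ℕ, (T p) 1 = b * p.1 := by
    intro p
    rw [hT]; beta_reduce
    rw [Finsupp.add_apply, Finsupp.add_apply, Finsupp.single_eq_same,
      Finsupp.single_eq_of_ne (by decide), Finsupp.single_eq_of_ne (by decide)]
    omega
  have hT2 : ∀ p : ℕ × ℕ, (T p) 2 = p.2 := by
    intro p
    rw [hT]; beta_reduce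
    rw [Finsupp.add_apply, Finsupp.add_apply, Finsupp.single_eq_same,
      Finsupp.single_eq_of_ne (by decide), Finsupp.single_eq_of_ne (by decide)]
    omega
  have hApow : ∀ p : ℕ × ℕ,
      A ^ p.1 * (MvPowerSeries.X 2 : MvPowerSeries (Fin 3) k) ^ p.2 = monomial (T p) 1 := by
    intro p
    rw [hA, mul_pow, ← pow_mul, ← pow_mul, X_pow_eq, X_pow_eq, X_pow_eq,
      monomial_mul_monomial, monomial_mul_monomial, one_mul, one_mul]
  set g : MvPowerSeries (Fin 2) k := fun q =>
    MvPowerSeries.coeff (Finsupp.single 0 (a * q 0) + Finsupp.single 1 (b * q 0)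
      + Finsupp.single 2 (q 1)) w with hg
  set S := subst2 g A (MvPowerSeries.X 2) with hS
  have hgcoeff : ∀ p : ℕ × ℕ,
      MvPowerSeries.coeff (Finsupp.single 0 p.1 + Finsupp.single 1 p.2) g
        = MvPowerSeries.coeff (T p) w := by
    intro p
    rw [coeff_raw, hg]; beta_reduce
    have h0 : ((Finsupp.single (0 : Fin 2) p.1 + Finsupp.single 1 p.2 : Fin 2 →₀ ℕ)) 0 = p.1 := by
      rw [Finsupp.add_apply, Finsupp.single_eq_same, Finsupp.single_eq_of_ne (by decide),
        add_zero]
    have h1 : ((Finsupp.single (0 : Fin 2) p.1 + Finsupp.single 1 p.2 : Fin 2 →₀ ℕ)) 1 = p.2 := by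
      rw [Finsupp.add_apply, Finsupp.single_eq_same, Finsupp.single_eq_of_ne (by decide),
        zero_add]
    rw [h0, h1, hT]
  have hScoeff : ∀ n : Fin 3 →₀ ℕ,
      MvPowerSeries.coeff n S = if b * (n 0) = a * (n 1)
        then MvPowerSeries.coeff n w else 0 := by
    intro n
    have hsum : MvPowerSeries.coeff n S = ∑ᶠ p : ℕ × ℕ,
        MvPowerSeries.coeff (Finsupp.single 0 p.1 + Finsupp.single 1 p.2) g *
          MvPowerSeries.coeff n (A ^ p.1 * (MvPowerSeries.X 2) ^ p.2) := rfl
    rw [hsum]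
    by_cases hdiag : b * n 0 = a * n 1
    · have hco : Nat.Coprime a b := hab
      have hadvd : a ∣ n 0 := hco.dvd_of_dvd_mul_left ⟨n 1, hdiag⟩
      obtain ⟨t, ht⟩ := hadvd
      have ht1 : b * t = n 1 := by
        have h4 : a * (b * t) = a * (n 1) := by rw [← hdiag, ht]; ring
        exact Nat.eq_of_mul_eq_mul_left ha h4
      have hTn : T (t, n 2) = n := by
        apply Finsupp.ext; intro i
        fin_cases i
        · show (T (t, n 2)) 0 = n 0
          rw [hT0]; exact ht.symm
        · show (T (t, n 2)) 1 = n 1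
          rw [hT1]; exact ht1
        · show (T (t, n 2)) 2 = n 2
          rw [hT2]
      rw [finsum_eq_single _ (t, n 2) ?_]
      · rw [hgcoeff, hApow, coeff_monomial, hTn, if_pos rfl, mul_one, if_pos hdiag]
      · rintro ⟨p1, p2⟩ hne
        rw [hApow, coeff_monomial]
        by_cases hnp : n = T (p1, p2)
        · exfalso
          apply hne
          have e0 : n 0 = a * p1 := by rw [hnp, hT0]
          have e2 : n 2 = p2 := by rw [hnp, hT2]
          have : p1 = t := by
            apply Nat.eq_of_mul_eq_mul_left ha
            rw [← e0, ht]
          rw [Prod.mk.injEq]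
          exact ⟨this, e2.symm⟩
        · rw [if_neg hnp, mul_zero]
    · rw [if_neg hdiag, finsum_eq_zero_of_forall_eq_zero ?_]
      intro p
      rw [hApow, coeff_monomial]
      by_cases hnp : n = T p
      · exfalso
        apply hdiag
        have e0 : n 0 = a * p.1 := by rw [hnp, hT0]
        have e1 : n 1 = b * p.1 := by rw [hnp, hT1]
        rw [e0, e1]; ring
      · rw [if_neg hnp, mul_zero]
  have hwS : ∀ n : Fin 3 →₀ ℕ, MvPowerSeries.coeff n (w - S)
      = if b * (n 0) = a * (n 1) then 0 else MvPowerSeries.coeff n w := by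
    intro n
    rw [map_sub, hScoeff]
    split
    · rw [sub_self]
    · rw [sub_zero]
  have hlow : ∀ n : Fin 3 →₀ ℕ, ¬ (D ≤ n) → MvPowerSeries.coeff n (w - S) = 0 := by
    intro n hn
    rw [hwS]
    split
    · rfl
    · exact hBneq n hn (by assumption)
  set ε : MvPowerSeries (Fin 3) k :=
    fun p => MvPowerSeries.coeff (p + D) (w - S) with hεdef
  have hsplit : w - S = monomial D 1 * ε := by
    ext n
    rw [coeff_monomial_mul]
    by_cases hn : D ≤ n
    · rw [if_pos hn, one_mul]
      have hre : MvPowerSeries.coeff (n - D) ε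
          = MvPowerSeries.coeff ((n - D) + D) (w - S) := rfl
      rw [hre, tsub_add_cancel_of_le hn]
    · rw [if_neg hn]; exact hlow n hn
  have hεunit : IsUnit ε := by
    rw [isUnit_iff_constantCoeff]
    have hc : MvPowerSeries.constantCoeff ε = MvPowerSeries.coeff D (w - S) := by
      rw [← coeff_zero_eq_constantCoeff, coeff_raw, hεdef]; beta_reduce
      rw [zero_add]
    rw [hc, hwS, hD0, hD1, if_neg hbcdd]
    exact hwD.isUnit
  set N : ℤ := (a:ℤ) * dd - (b:ℤ) * cc with hN
  obtain ⟨η, hη⟩ := exists_zpow_root N hADZ hεunit.unit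
  set α := η ^ (-(b:ℤ)) with hα
  set β := η ^ ((a:ℤ)) with hβ
  have hαβ1 : (α^a * β^b : (MvPowerSeries (Fin 3) k)ˣ) = 1 := by
    rw [hα, hβ, ← zpow_natCast (η ^ (-(b:ℤ))) a, ← zpow_natCast (η ^ ((a:ℤ))) b,
      ← zpow_mul, ← zpow_mul, ← zpow_add]
    rw [show (-(b:ℤ))*(a:ℤ) + (a:ℤ)*(b:ℤ) = 0 by ring, zpow_zero]
  have hαβ2 : (α^cc * β^dd : (MvPowerSeries (Fin 3) k)ˣ) = hεunit.unit := by
    rw [hα, hβ, ← zpow_natCast (η ^ (-(b:ℤ))) cc, ← zpow_natCast (η ^ ((a:ℤ))) dd,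
      ← zpow_mul, ← zpow_mul, ← zpow_add]
    rw [show (-(b:ℤ))*(cc:ℤ) + (a:ℤ)*(dd:ℤ) = N by rw [hN]; ring, hη]
  have hxy : ((α : MvPowerSeries (Fin 3) k) * MvPowerSeries.X 0)^a
      * ((β : MvPowerSeries (Fin 3) k) * MvPowerSeries.X 1)^b = A := by
    rw [mul_pow, mul_pow]
    have hr1 : ((α:MvPowerSeries (Fin 3) k)^a * (MvPowerSeries.X 0)^a)
        * ((β:MvPowerSeries (Fin 3) k)^b * (MvPowerSeries.X 1)^b)
        = ((α:MvPowerSeries (Fin 3) k)^a * (β:MvPowerSeries (Fin 3) k)^b) * A := by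
      rw [hA]; ring
    rw [hr1]
    have : (α:MvPowerSeries (Fin 3) k)^a * (β:MvPowerSeries (Fin 3) k)^b
        = ((α^a * β^b : (MvPowerSeries (Fin 3) k)ˣ) : MvPowerSeries (Fin 3) k) := by
      push_cast
      ring
    rw [this, hαβ1, Units.val_one, one_mul]
  have hXcd : (MvPowerSeries.X 0 : MvPowerSeries (Fin 3) k)^cc * (MvPowerSeries.X 1)^dd
      = monomial D 1 := by
    rw [X_pow_eq, X_pow_eq, monomial_mul_monomial, one_mul, hD]
  have hcd : ((α : MvPowerSeries (Fin 3) k) * MvPowerSeries.X 0)^cc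
      * ((β : MvPowerSeries (Fin 3) k) * MvPowerSeries.X 1)^dd = w - S := by
    rw [mul_pow, mul_pow]
    have hr1 : ((α:MvPowerSeries (Fin 3) k)^cc * (MvPowerSeries.X 0)^cc)
        * ((β:MvPowerSeries (Fin 3) k)^dd * (MvPowerSeries.X 1)^dd)
        = ((α:MvPowerSeries (Fin 3) k)^cc * (β:MvPowerSeries (Fin 3) k)^dd)
          * ((MvPowerSeries.X 0 : MvPowerSeries (Fin 3) k)^cc * (MvPowerSeries.X 1)^dd) := by
      ring
    rw [hr1, hXcd]
    have : (α:MvPowerSeries (Fin 3) k)^cc * (β:MvPowerSeries (Fin 3) k)^dd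
        = ((α^cc * β^dd : (MvPowerSeries (Fin 3) k)ˣ) : MvPowerSeries (Fin 3) k) := by
      push_cast
      ring
    rw [this, hαβ2, IsUnit.unit_spec, hsplit]
    ring
  -- regular system entries
  have hentry : ∀ (γ : (MvPowerSeries (Fin 3) k)ˣ) (t j : Fin 3),
      MvPowerSeries.coeff (Finsupp.single j 1)
        ((γ : MvPowerSeries (Fin 3) k) * MvPowerSeries.X t)
      = if t = j then MvPowerSeries.constantCoeff (γ : MvPowerSeries (Fin 3) k)
        else 0 := by
    intro γ t j
    rw [show (MvPowerSeries.X t : MvPowerSeries (Fin 3) k)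
        = monomial (Finsupp.single t 1) 1 from rfl, coeff_mul_monomial]
    by_cases htj : t = j
    · subst htj
      rw [if_pos le_rfl, tsub_self, coeff_zero_eq_constantCoeff, mul_one, if_pos rfl]
    · rw [if_neg, if_neg htj]
      rw [Finsupp.single_le_iff, Finsupp.single_apply, if_neg (by exact fun h => htj h.symm)]
      omega
  have hXentry : ∀ j : Fin 3,
      MvPowerSeries.coeff (Finsupp.single j 1) (MvPowerSeries.X 2 : MvPowerSeries (Fin 3) k)
      = if (2 : Fin 3) = j then 1 else 0 := by
    intro j
    rw [show (MvPowerSeries.X 2 : MvPowerSeries (Fin 3) k)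
        = monomial (Finsupp.single 2 1) 1 from rfl, coeff_monomial]
    by_cases hj : (2 : Fin 3) = j
    · subst hj; rw [if_pos rfl, if_pos rfl]
    · rw [if_neg, if_neg hj]
      intro h
      apply hj
      have := congrArg (fun f : Fin 3 →₀ ℕ => f j) h
      simp only [Finsupp.single_eq_same, Finsupp.single_apply] at this
      by_contra h2
      rw [if_neg h2] at this
      omega
  have hα0 : MvPowerSeries.constantCoeff (α : MvPowerSeries (Fin 3) k) ≠ 0 :=
    ((isUnit_iff_constantCoeff).mp α.isUnit).ne_zero
  have hβ0 : MvPowerSeries.constantCoeff (β : MvPowerSeries (Fin 3) k) ≠ 0 :=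
    ((isUnit_iff_constantCoeff).mp β.isUnit).ne_zero
  refine ⟨(α : MvPowerSeries (Fin 3) k) * MvPowerSeries.X 0,
    (β : MvPowerSeries (Fin 3) k) * MvPowerSeries.X 1, cc, dd, g, ⟨?_, ?_, ?_, ?_⟩, ?_, ?_, ?_⟩
  · rw [map_mul, MvPowerSeries.constantCoeff_X, mul_zero]
  · rw [map_mul, MvPowerSeries.constantCoeff_X, mul_zero]
  · exact MvPowerSeries.constantCoeff_X 2
  · rw [Matrix.det_fin_three]
    simp only [Matrix.of_apply, Matrix.cons_val', Matrix.cons_val_zero, Matrix.cons_val_one,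
      Matrix.head_cons, Matrix.empty_val', Matrix.cons_val_fin_one, Matrix.head_fin_const,
      Matrix.cons_val_two, Matrix.tail_cons]
    rw [hentry α 0 0, hentry α 0 1, hentry α 0 2, hentry β 1 0, hentry β 1 1, hentry β 1 2,
      hXentry 0, hXentry 1, hXentry 2]
    norm_num [Fin.ext_iff]
    exact ⟨hα0, hβ0⟩
  · rw [hxy, hA]
  · exact hADZ
  · rw [hxy, hcd, ← hS]
    ring
end
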